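/- Let V be a finite-dimensional complex inner product space, let u, v be unit vectors in V, and let P be an orthogonal projection on V with Pu = u. If |⟨u, v⟩|² + ‖P(v − ⟨u,v⟩u)‖² = 1, then Pv = v. -/

import Mathlib

/-- If `u, v` are unit vectors, `P` an orthogonal projection (symmetric
idempotent) with `Pu = u`, and `|⟨u,v⟩|² + ‖P(v − ⟨u,v⟩u)‖² = 1`, then `Pv = v`. -/
theorem projection_full_overlap {V : Type*} [NormedAddCommGroup V]
    [InnerProductSpace ℂ V] [FiniteDimensional ℂ V]
    (P : V →ₗ[ℂ] V) (hPsym : P.IsSymmetric) (hPidem : P ∘ₗ P = P)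
    (u v : V) (hu : ‖u‖ = 1) (hv : ‖v‖ = 1) (hPu : P u = u)
    (h : ‖(inner ℂ u v : ℂ)‖ ^ 2 + ‖P (v - (inner ℂ u v : ℂ) • u)‖ ^ 2 = 1) :
    P v = v := by
  set β : ℂ := inner ℂ u v with hβ
  set w : V := v - β • u with hw
  have huu : (inner ℂ u u : ℂ) = 1 := by
    rw [inner_self_eq_norm_sq_to_K, hu]; norm_num
  have huw : (inner ℂ u w : ℂ) = 0 := by
    simp [hw, inner_sub_right, inner_smul_right, huu, hu, hβ]
  -- ‖w‖² = 1 - ‖β‖²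
  have hvw : v = β • u + w := by simp [hw]
  have hnv : ‖β‖ ^ 2 + ‖w‖ ^ 2 = 1 := by
    have horth : (inner ℂ (β • u) w : ℂ) = 0 := by
      simp [inner_smul_left, huw]
    have := norm_add_sq (𝕜 := ℂ) (β • u) w
    rw [horth] at this
    simp only [map_zero, mul_zero, add_zero] at this
    rw [← hvw] at this
    rw [hv] at this
    simp [norm_smul, hu] at this
    linarith [this]
  -- ‖Pw‖² = ‖w‖²
  have hPw_norm : ‖P w‖ ^ 2 = ‖w‖ ^ 2 := by linarith [h, hnv]
  -- Pw ⊥ (w - Pw)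
  have hPPw : P (P w) = P w := by
    have := congrArg (fun f => f w) hPidem
    simpa using this
  have horth2 : (inner ℂ (P w) (w - P w) : ℂ) = 0 := by
    rw [inner_sub_right]
    have h1 : (inner ℂ (P w) w : ℂ) = inner ℂ w (P w) := hPsym w w
    have h2 : (inner ℂ (P w) (P w) : ℂ) = inner ℂ w (P w) := by
      have := hPsym w (P w)
      rw [hPPw] at this
      exact this
    rw [h1, h2]
    ring
  have hwdecomp : w = P w + (w - P w) := by abel
  have hnw : ‖w‖ ^ 2 = ‖P w‖ ^ 2 + ‖w - P w‖ ^ 2 := by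
    have := norm_add_sq (𝕜 := ℂ) (P w) (w - P w)
    rw [horth2] at this
    rw [← hwdecomp] at this
    simpa using this
  have hzero : ‖w - P w‖ ^ 2 = 0 := by linarith
  have hPww : P w = w := by
    have : w - P w = 0 := by
      have := pow_eq_zero_iff (n := 2) (by norm_num) |>.mp hzero
      exact norm_eq_zero.mp this
    have := sub_eq_zero.mp this
    exact this.symm
  rw [hvw]
  simp [map_add, map_smul, hPu, hPww]
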